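/- Let C be a category possessing a terminal object, and let L : C → D be a localization of C with respect to the class of all morphisms of C (so that D is obtained from C by formally inverting every morphism, with the usual universal property of localization). Then D is equivalent to the terminal category (the category with exactly one object and one morphism). In particular, the fundamental groupoid of a category with a terminal object is equivalent to a trivial groupoid. -/
import Mathlib

/-!
STATEMENT 8: If a category `C` has a terminal object, then the localization of `C`
at the class of all morphisms of `C` is equivalent to the terminal category
(the category with exactly one object and one morphism).  In particular, the
fundamental groupoid of a category with a terminal object is equivalent to a
trivial groupoid.
-/

open CategoryTheory CategoryTheory.Limits

universe v u v₂ u₂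

theorem localization_at_all_morphisms_of_hasTerminal_equiv_terminal_category
    {C : Type u} [Category.{v} C] {D : Type u₂} [Category.{v₂} D]
    [HasTerminal C] (L : C ⥤ D)
    [L.IsLocalization (⊤ : MorphismProperty C)] :
    Nonempty (D ≌ Discrete PUnit.{1}) := by
  let F : D ⥤ Discrete PUnit.{1} := Functor.star D
  let G : Discrete PUnit.{1} ⥤ D := (Functor.const _).obj (L.obj (⊤_ C))
  -- natural isomorphism on `C` between `L` and the constant functor at `L.obj (⊤_ C)`
  let e : L ≅ (Functor.const C).obj (L.obj (⊤_ C)) :=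
    NatIso.ofComponents
      (fun X =>
        haveI := Localization.inverts L (⊤ : MorphismProperty C)
          (terminal.from X) trivial
        asIso (L.map (terminal.from X)))
      (fun f => by
        dsimp
        rw [Category.comp_id, ← L.map_comp]
        congr 1
        apply Subsingleton.elim)
  haveI : Localization.Lifting L (⊤ : MorphismProperty C)
      ((Functor.const C).obj (L.obj (⊤_ C))) (F ⋙ G) := by
    constructor
    exact NatIso.ofComponents (fun X => Iso.refl _) (by simp [F, G])
  let η : 𝟭 D ≅ F ⋙ G :=
    Localization.liftNatIso L (⊤ : MorphismProperty C) L
      ((Functor.const C).obj (L.obj (⊤_ C))) (𝟭 D) (F ⋙ G) e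
  let ε : G ⋙ F ≅ 𝟭 (Discrete PUnit.{1}) :=
    NatIso.ofComponents (fun X => eqToIso (by apply Subsingleton.elim))
      (fun f => by apply Subsingleton.elim)
  exact ⟨CategoryTheory.Equivalence.mk F G η ε⟩
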